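/- Let G and H be finite simple connected non-complete graphs, let g_i ≠ g_j be vertices of G, and let h_k, h_l ∈ V(H), giving vertices (g_i,h_k) of the copy H^{g_i} and (g_j,h_l) of the copy H^{g_j} in the corona product G ∘ H. Then WT_{G∘H}((g_i,h_k),(g_j,h_l)) = V(G ∘ H) \ ( { (g_i,x) : x h_k ∈ E(H) } ∪ { (g_j,y) : y h_l ∈ E(H) } ). -/

import Mathlib

open SimpleGraph

/-- A walk `w : u → v` is a *weakly toll walk* if every vertex of the walk adjacent to `u`
equals the second vertex of the walk, and every vertex of the walk adjacent to `v` equals the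
second-to-last vertex of the walk. -/
def IsWeaklyTollWalk {V : Type*} (G : SimpleGraph V) {u v : V} (w : G.Walk u v) : Prop :=
  (∀ i ≤ w.length, G.Adj u (w.getVert i) → w.getVert i = w.getVert 1) ∧
  (∀ i ≤ w.length, G.Adj (w.getVert i) v → w.getVert i = w.getVert (w.length - 1))

/-- The weakly toll interval `WT_G(u,v)`: all vertices lying on some weakly toll walk
between `u` and `v`. -/
def wtInterval {V : Type*} (G : SimpleGraph V) (u v : V) : Set V :=
  {x | ∃ w : G.Walk u v, IsWeaklyTollWalk G w ∧ x ∈ w.support}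

/-- `WT(S)`: the union of the weakly toll intervals between pairs of vertices of `S`. -/
def wtClosure {V : Type*} (G : SimpleGraph V) (S : Set V) : Set V :=
  ⋃ u ∈ S, ⋃ v ∈ S, wtInterval G u v

/-- `S` is a weakly toll set if the weakly toll intervals between its members cover `V(G)`. -/
def IsWeaklyTollSet {V : Type*} (G : SimpleGraph V) (S : Set V) : Prop :=
  wtClosure G S = Set.univ

/-- The weakly toll number: the minimum cardinality of a weakly toll set. -/
noncomputable def wtn {V : Type*} (G : SimpleGraph V) : ℕ :=
  sInf {n | ∃ S : Set V, IsWeaklyTollSet G S ∧ S.ncard = n}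

/-- The weakly toll convex hull of `S`: the union of the iterates `WT^k(S)`. -/
def wtHull {V : Type*} (G : SimpleGraph V) (S : Set V) : Set V :=
  ⋃ k : ℕ, (wtClosure G)^[k] S

/-- `S` is a weakly toll hull set if its weakly toll convex hull is all of `V(G)`. -/
def IsWeaklyTollHullSet {V : Type*} (G : SimpleGraph V) (S : Set V) : Prop :=
  wtHull G S = Set.univ

/-- The weakly toll hull number: the minimum cardinality of a weakly toll hull set. -/
noncomputable def wth {V : Type*} (G : SimpleGraph V) : ℕ :=
  sInf {n | ∃ S : Set V, IsWeaklyTollHullSet G S ∧ S.ncard = n}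

/-- A walk `w : u → v` is a *semi weakly toll walk* if every vertex of the walk adjacent to `u`
equals the second vertex of the walk (no condition at `v`). -/
def IsSemiWeaklyTollWalk {V : Type*} (G : SimpleGraph V) {u v : V} (w : G.Walk u v) : Prop :=
  ∀ i ≤ w.length, G.Adj u (w.getVert i) → w.getVert i = w.getVert 1

/-- The semi weakly toll interval `SWT_G(u,v)`. -/
def swtInterval {V : Type*} (G : SimpleGraph V) (u v : V) : Set V :=
  {x | ∃ w : G.Walk u v, IsSemiWeaklyTollWalk G w ∧ x ∈ w.support}

/-- The strong product of two simple graphs. -/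
def strongProd {V W : Type*} (G : SimpleGraph V) (H : SimpleGraph W) :
    SimpleGraph (V × W) where
  Adj p q := (G.Adj p.1 q.1 ∧ p.2 = q.2) ∨ (p.1 = q.1 ∧ H.Adj p.2 q.2) ∨
    (G.Adj p.1 q.1 ∧ H.Adj p.2 q.2)
  symm := by
    refine ⟨?_⟩
    rintro p q (⟨h1, h2⟩ | ⟨h1, h2⟩ | ⟨h1, h2⟩)
    · exact Or.inl ⟨h1.symm, h2.symm⟩
    · exact Or.inr (Or.inl ⟨h1.symm, h2.symm⟩)
    · exact Or.inr (Or.inr ⟨h1.symm, h2.symm⟩)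
  loopless := by
    refine ⟨?_⟩
    rintro p (⟨h, -⟩ | ⟨-, h⟩ | ⟨h, -⟩)
    · exact G.loopless.irrefl _ h
    · exact H.loopless.irrefl _ h
    · exact G.loopless.irrefl _ h

/-- The lexicographic product of two simple graphs. -/
def lexProd {V W : Type*} (G : SimpleGraph V) (H : SimpleGraph W) :
    SimpleGraph (V × W) where
  Adj p q := G.Adj p.1 q.1 ∨ (p.1 = q.1 ∧ H.Adj p.2 q.2)
  symm := by
    refine ⟨?_⟩
    rintro p q (h | ⟨h1, h2⟩)
    · exact Or.inl h.symm
    · exact Or.inr ⟨h1.symm, h2.symm⟩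
  loopless := by
    refine ⟨?_⟩
    rintro p (h | ⟨-, h⟩)
    · exact G.loopless.irrefl _ h
    · exact H.loopless.irrefl _ h

/-- The adjacency relation of the corona product `G ∘ H`. -/
def coronaAdj {V W : Type*} (G : SimpleGraph V) (H : SimpleGraph W) :
    V ⊕ V × W → V ⊕ V × W → Prop
  | Sum.inl g, Sum.inl g' => G.Adj g g'
  | Sum.inl g, Sum.inr p => g = p.1
  | Sum.inr p, Sum.inl g => p.1 = g
  | Sum.inr p, Sum.inr q => p.1 = q.1 ∧ H.Adj p.2 q.2

/-- The corona product `G ∘ H`: one copy of `G` and a copy of `H` for each vertex `g` of `G`,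
with `g` joined to every vertex of its copy of `H`. -/
def corona {V W : Type*} (G : SimpleGraph V) (H : SimpleGraph W) :
    SimpleGraph (V ⊕ V × W) where
  Adj := coronaAdj G H
  symm := by
    refine ⟨?_⟩
    rintro (g | p) (g' | q) h <;> simp only [coronaAdj] at h ⊢
    · exact h.symm
    · exact h.symm
    · exact h.symm
    · exact ⟨h.1.symm, h.2.symm⟩
  loopless := by
    refine ⟨?_⟩
    rintro (g | p) h <;> simp only [coronaAdj] at h
    · exact G.loopless.irrefl _ h
    · exact H.loopless.irrefl _ h.2

section CoronaAux

variable {V W : Type*} (G : SimpleGraph V) (H : SimpleGraph W)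

lemma corona_adj_inl_inl {a b : V} :
    (corona G H).Adj (Sum.inl a) (Sum.inl b) ↔ G.Adj a b := Iff.rfl

lemma corona_adj_inl_inr {a : V} {q : V × W} :
    (corona G H).Adj (Sum.inl a) (Sum.inr q) ↔ a = q.1 := Iff.rfl

lemma corona_adj_inr_inl {p : V × W} {b : V} :
    (corona G H).Adj (Sum.inr p) (Sum.inl b) ↔ p.1 = b := Iff.rfl

lemma corona_adj_inr_inr {p q : V × W} :
    (corona G H).Adj (Sum.inr p) (Sum.inr q) ↔ p.1 = q.1 ∧ H.Adj p.2 q.2 := Iff.rfl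

/-- The embedding of `G` into the corona product. -/
def coronaInl : G →g corona G H where
  toFun := Sum.inl
  map_rel' := fun h => h

/-- Any walk in the corona product starting inside the copy `H^g` and ending outside of it
must pass through the apex vertex `g`. -/
lemma corona_apex_mem_support (g : V) :
    ∀ {x y : V ⊕ V × W} (w : (corona G H).Walk x y),
      (∃ h, x = Sum.inr (g, h)) → (∀ h, y ≠ Sum.inr (g, h)) → Sum.inl g ∈ w.support := by
  intro x y w
  induction w with
  | nil =>
    rintro ⟨h, rfl⟩ hy
    exact absurd rfl (hy h)
  | @cons a b c hadj w ih =>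
    rintro ⟨h, rfl⟩ hy
    rw [SimpleGraph.Walk.support_cons]
    cases b with
    | inl b' =>
      have hb : (g, h).1 = b' := hadj
      subst hb
      exact List.mem_cons_of_mem _ w.start_mem_support
    | inr q =>
      have hb : (g, h).1 = q.1 := hadj.1
      have hq : (Sum.inr q : V ⊕ V × W) = Sum.inr (g, q.2) := by
        obtain ⟨q1, q2⟩ := q
        simp only at hb
        rw [hb]
      exact List.mem_cons_of_mem _ (ih ⟨q.2, hq⟩ hy)

/-- Building a weakly toll walk between `(gi, hk)` and `(gj, hl)` from a suitable walk
between the apexes `gi` and `gj`. -/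
lemma corona_build_walk (gi gj : V) (hij : gi ≠ gj) (hk hl : W)
    (M : (corona G H).Walk (Sum.inl gi) (Sum.inl gj))
    (hM1 : ∀ z ∈ M.support, (corona G H).Adj (Sum.inr (gi, hk)) z → z = Sum.inl gi)
    (hM2 : ∀ z ∈ M.support, (corona G H).Adj z (Sum.inr (gj, hl)) → z = Sum.inl gj) :
    ∃ w : (corona G H).Walk (Sum.inr (gi, hk)) (Sum.inr (gj, hl)),
      IsWeaklyTollWalk (corona G H) w ∧ M.support ⊆ w.support := by
  have h1 : (corona G H).Adj (Sum.inr (gi, hk)) (Sum.inl gi) := rfl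
  have h2 : (corona G H).Adj (Sum.inl gj) (Sum.inr (gj, hl)) := rfl
  have huv : ¬ (corona G H).Adj (Sum.inr (gi, hk)) (Sum.inr (gj, hl)) := by
    rw [corona_adj_inr_inr]
    rintro ⟨h, -⟩
    exact hij h
  set w : (corona G H).Walk (Sum.inr (gi, hk)) (Sum.inr (gj, hl)) :=
    SimpleGraph.Walk.cons h1 (M.append (SimpleGraph.Walk.cons h2 SimpleGraph.Walk.nil)) with hw
  have hsupp : w.support = Sum.inr (gi, hk) :: (M.support ++ [Sum.inr (gj, hl)]) := by
    rw [hw]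
    simp [SimpleGraph.Walk.support_append]
  have hlen : w.length = M.length + 2 := by
    rw [hw]
    simp [SimpleGraph.Walk.length_append]
  have hg1 : w.getVert 1 = Sum.inl gi := by
    rw [hw]
    rw [show (1 : ℕ) = 0 + 1 from rfl, SimpleGraph.Walk.getVert_cons_succ,
      SimpleGraph.Walk.getVert_zero]
  have hg2 : w.getVert (w.length - 1) = Sum.inl gj := by
    rw [hlen, hw]
    rw [show M.length + 2 - 1 = M.length + 1 from rfl, SimpleGraph.Walk.getVert_cons_succ,
      SimpleGraph.Walk.getVert_append]
    simp
  refine ⟨w, ⟨?_, ?_⟩, ?_⟩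
  · intro i hi hadj
    have hz : w.getVert i ∈ w.support :=
      SimpleGraph.Walk.mem_support_iff_exists_getVert.mpr ⟨i, rfl, hi⟩
    rw [hsupp] at hz
    rcases List.mem_cons.1 hz with hz | hz
    · rw [hz] at hadj
      exact absurd hadj ((corona G H).loopless.irrefl _)
    rcases List.mem_append.1 hz with hz | hz
    · rw [hg1]; exact hM1 _ hz hadj
    · rw [List.mem_singleton] at hz
      rw [hz] at hadj
      exact absurd hadj huv
  · intro i hi hadj
    have hz : w.getVert i ∈ w.support :=
      SimpleGraph.Walk.mem_support_iff_exists_getVert.mpr ⟨i, rfl, hi⟩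
    rw [hsupp] at hz
    rcases List.mem_cons.1 hz with hz | hz
    · rw [hz] at hadj
      exact absurd hadj huv
    rcases List.mem_append.1 hz with hz | hz
    · rw [hg2]; exact hM2 _ hz hadj
    · rw [List.mem_singleton] at hz
      rw [hz] at hadj
      exact absurd hadj ((corona G H).loopless.irrefl _)
  · intro z hz
    rw [hsupp]
    exact List.mem_cons_of_mem _ (List.mem_append_left _ hz)

@[simp] lemma coronaInl_coe : ⇑(coronaInl G H) = Sum.inl := rfl

end CoronaAux

/-- In the corona product of finite connected non-complete graphs `G`, `H`,
for distinct `g_i, g_j ∈ V(G)` and `h_k, h_l ∈ V(H)`,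
`WT_{G∘H}((g_i,h_k),(g_j,h_l)) = V(G∘H) \ (N_{H^{g_i}}(h_k) ∪ N_{H^{g_j}}(h_l))`. -/
theorem wtInterval_corona_diff_copies {V W : Type*} [Fintype V] [Fintype W]
    (G : SimpleGraph V) (H : SimpleGraph W)
    (hGc : G.Connected) (hHc : H.Connected)
    (hGnc : G ≠ ⊤) (hHnc : H ≠ ⊤)
    (gi gj : V) (hij : gi ≠ gj) (hk hl : W) :
    wtInterval (corona G H) (Sum.inr (gi, hk)) (Sum.inr (gj, hl)) =
      Set.univ \ ({z : V ⊕ V × W | ∃ x : W, z = Sum.inr (gi, x) ∧ H.Adj x hk} ∪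
        {z : V ⊕ V × W | ∃ y : W, z = Sum.inr (gj, y) ∧ H.Adj y hl}) := by
  ext z
  simp only [Set.mem_diff, Set.mem_univ, true_and, Set.mem_union, Set.mem_setOf_eq]
  constructor
  · rintro ⟨w, ⟨hw1, hw2⟩, hz⟩
    rintro (⟨x, rfl, hx⟩ | ⟨y, rfl, hy⟩)
    · have hgi : Sum.inl gi ∈ w.support := by
        refine corona_apex_mem_support G H gi w ⟨hk, rfl⟩ ?_
        intro h hEq
        simp only [Sum.inr.injEq, Prod.mk.injEq] at hEq
        exact hij hEq.1.symm
      obtain ⟨j, hjv, hjle⟩ := SimpleGraph.Walk.mem_support_iff_exists_getVert.mp hgi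
      have e1 : w.getVert 1 = Sum.inl gi := by
        have h' := hw1 j hjle (by rw [hjv]; exact rfl)
        rw [← h']
        exact hjv
      obtain ⟨i, hiv, hile⟩ := SimpleGraph.Walk.mem_support_iff_exists_getVert.mp hz
      have e2 := hw1 i hile (by rw [hiv]; exact ⟨rfl, hx.symm⟩)
      rw [hiv, e1] at e2
      simp at e2
    · have hgj : Sum.inl gj ∈ w.support := by
        have h' := corona_apex_mem_support G H gj w.reverse ⟨hl, rfl⟩ ?_
        · rw [SimpleGraph.Walk.support_reverse] at h'
          exact List.mem_reverse.mp h'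
        · intro h hEq
          simp only [Sum.inr.injEq, Prod.mk.injEq] at hEq
          exact hij hEq.1
      obtain ⟨j, hjv, hjle⟩ := SimpleGraph.Walk.mem_support_iff_exists_getVert.mp hgj
      have e1 : w.getVert (w.length - 1) = Sum.inl gj := by
        have h' := hw2 j hjle (by rw [hjv]; exact rfl)
        rw [← h']
        exact hjv
      obtain ⟨i, hiv, hile⟩ := SimpleGraph.Walk.mem_support_iff_exists_getVert.mp hz
      have e2 := hw2 i hile (by rw [hiv]; exact ⟨rfl, hy⟩)
      rw [hiv, e1] at e2
      simp at e2
  · intro hznot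
    push_neg at hznot
    obtain ⟨hzA, hzB⟩ := hznot
    obtain g | ⟨g, h⟩ := z
    · -- z is a vertex of the copy of G
      obtain ⟨p1⟩ := hGc.preconnected gi g
      obtain ⟨p2⟩ := hGc.preconnected g gj
      set M := (p1.append p2).map (coronaInl G H) with hM
      have hMsupp : M.support = (p1.append p2).support.map Sum.inl := by
        rw [hM, SimpleGraph.Walk.support_map, coronaInl_coe]
      have hM1 : ∀ z' ∈ M.support, (corona G H).Adj (Sum.inr (gi, hk)) z' →
          z' = Sum.inl gi := by
        intro z' hz' hadj
        rw [hMsupp] at hz'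
        obtain ⟨a, -, rfl⟩ := List.mem_map.mp hz'
        have hga : gi = a := hadj
        rw [hga]
      have hM2 : ∀ z' ∈ M.support, (corona G H).Adj z' (Sum.inr (gj, hl)) →
          z' = Sum.inl gj := by
        intro z' hz' hadj
        rw [hMsupp] at hz'
        obtain ⟨a, -, rfl⟩ := List.mem_map.mp hz'
        have hga : a = gj := hadj
        rw [hga]
      obtain ⟨w, hwt, hsub⟩ := corona_build_walk G H gi gj hij hk hl M hM1 hM2
      refine ⟨w, hwt, hsub ?_⟩
      show Sum.inl g ∈ M.support
      rw [hMsupp]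
      refine List.mem_map_of_mem ?_
      rw [SimpleGraph.Walk.support_append]
      exact List.mem_append_left _ p1.end_mem_support
    · -- z is a vertex of a copy of H
      have hA : g = gi → ¬ H.Adj h hk := by
        intro hg had
        exact hzA h (by rw [hg]) had
      have hB : g = gj → ¬ H.Adj h hl := by
        intro hg had
        exact hzB h (by rw [hg]) had
      obtain ⟨p1⟩ := hGc.preconnected gi g
      obtain ⟨p2⟩ := hGc.preconnected g gj
      have e1 : (corona G H).Adj (Sum.inl g) (Sum.inr (g, h)) := rfl
      have e2 : (corona G H).Adj (Sum.inr (g, h)) (Sum.inl g) := rfl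
      set M := (p1.map (coronaInl G H)).append
        (SimpleGraph.Walk.cons e1 (SimpleGraph.Walk.cons e2 (p2.map (coronaInl G H)))) with hM
      have hMsupp : M.support =
          p1.support.map Sum.inl ++ (Sum.inr (g, h) :: p2.support.map Sum.inl) := by
        rw [hM, SimpleGraph.Walk.support_append]
        simp
        exact congrArg₂ (· ++ ·) (SimpleGraph.Walk.support_map _ _)
          (congrArg (List.cons _) (SimpleGraph.Walk.support_map _ _))
      have hM1 : ∀ z' ∈ M.support, (corona G H).Adj (Sum.inr (gi, hk)) z' →
          z' = Sum.inl gi := by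
        intro z' hz' hadj
        rw [hMsupp] at hz'
        rcases List.mem_append.1 hz' with hz' | hz'
        · obtain ⟨a, -, rfl⟩ := List.mem_map.mp hz'
          have hga : gi = a := hadj
          rw [hga]
        rcases List.mem_cons.1 hz' with hz' | hz'
        · rw [hz'] at hadj
          obtain ⟨h1', h2'⟩ := (corona_adj_inr_inr G H).mp hadj
          exact absurd h2'.symm (hA h1'.symm)
        · obtain ⟨a, -, rfl⟩ := List.mem_map.mp hz'
          have hga : gi = a := hadj
          rw [hga]
      have hM2 : ∀ z' ∈ M.support, (corona G H).Adj z' (Sum.inr (gj, hl)) →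
          z' = Sum.inl gj := by
        intro z' hz' hadj
        rw [hMsupp] at hz'
        rcases List.mem_append.1 hz' with hz' | hz'
        · obtain ⟨a, -, rfl⟩ := List.mem_map.mp hz'
          have hga : a = gj := hadj
          rw [hga]
        rcases List.mem_cons.1 hz' with hz' | hz'
        · rw [hz'] at hadj
          obtain ⟨h1', h2'⟩ := (corona_adj_inr_inr G H).mp hadj
          exact absurd h2' (hB h1')
        · obtain ⟨a, -, rfl⟩ := List.mem_map.mp hz'
          have hga : a = gj := hadj
          rw [hga]
      obtain ⟨w, hwt, hsub⟩ := corona_build_walk G H gi gj hij hk hl M hM1 hM2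
      refine ⟨w, hwt, hsub ?_⟩
      show Sum.inr (g, h) ∈ M.support
      rw [hMsupp]
      exact List.mem_append_right _ List.mem_cons_self
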